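/- arXiv:1904.11635 — 3 statements merged into one kernel-verified Lean document; each statement's English description precedes it below -/
import Mathlib

section
/- If v is a path in Δ with 0 ≠ v̄ in A, then there exist paths δ_1, δ_2 in KΔ and some p_j ∈ 𝕄 such that p̄_j^*(overline{δ_1 v δ_2}) ≠ 0; in particular, every path in Δ that is nonzero in A is contained in an elementary cycle. -/
noncomputable section
open Classical

/-- A quiver, given by a type of vertices and a family of types of arrows. -/
structure QD : Type 1 where
  V : Type
  Ar : V → V → Type

namespace QD

variable {Q : QD}

/-- Oriented paths in a quiver, composed from left to right. -/
inductive Path (Q : QD) : Q.V → Q.V → Type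
  | nil (i : Q.V) : Path Q i i
  | cons {i j k : Q.V} (a : Q.Ar i j) (p : Path Q j k) : Path Q i k

namespace Path

/-- Concatenation of paths. -/
def comp : {i j k : Q.V} → Path Q i j → Path Q j k → Path Q i k
  | _, _, _, nil _, q => q
  | _, _, _, cons a p, q => cons a (comp p q)

/-- Length of a path. -/
def length : {i j : Q.V} → Path Q i j → ℕ
  | _, _, nil _ => 0
  | _, _, cons _ p => length p + 1

end Path

/-- A path bundled with its endpoints. -/
def PathIn (Q : QD) : Type := Σ i : Q.V, Σ j : Q.V, Path Q i j

/-- Bundle a path with its endpoints. -/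
def Path.sig {i j : Q.V} (p : Path Q i j) : PathIn Q := ⟨i, j, p⟩

/-- The arrow `a` occurs in the path `p`. -/
def Path.arrowMem {i j : Q.V} (a : Q.Ar i j) : {u v : Q.V} → Path Q u v → Prop
  | _, _, Path.nil _ => False
  | _, _, @Path.cons _ u u' _ b p =>
      (⟨u, u', b⟩ : Σ i : Q.V, Σ j : Q.V, Q.Ar i j) = ⟨i, j, a⟩ ∨ Path.arrowMem a p

end QD

/-- The path algebra of a quiver over a field `K`, described axiomatically:
an algebra with a basis indexed by the paths, multiplying by concatenation. -/
structure PathAlg (K : Type) [Field K] (Q : QD) [Fintype Q.V] where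
  P : Type
  [ringP : Ring P]
  [algP : Algebra K P]
  ι : {i j : Q.V} → Q.Path i j → P
  ι_comp : ∀ {i j k : Q.V} (p : Q.Path i j) (q : Q.Path j k), ι (p.comp q) = ι p * ι q
  ι_ortho : ∀ {i j k l : Q.V} (p : Q.Path i j) (q : Q.Path k l), j ≠ k → ι p * ι q = 0
  sum_nil : (∑ i : Q.V, ι (QD.Path.nil i)) = 1
  li : LinearIndependent K (fun p : QD.PathIn Q => ι p.2.2)
  span_top : Submodule.span K (Set.range (fun p : QD.PathIn Q => ι p.2.2)) = ⊤

attribute [instance] PathAlg.ringP PathAlg.algP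

section Main

variable (K : Type) [Field K] (Q : QD) [Fintype Q.V] [∀ i j : Q.V, Fintype (Q.Ar i j)]
variable (n : ℕ) (PA : PathAlg K Q)

/-- The relation whose `RingQuot` is the truncated quiver algebra `KΔ/R_Δ^n`:
identify with `0` the image of every path of length at least `n`. -/
def truncRel : PA.P → PA.P → Prop := fun u v =>
  v = 0 ∧ ∃ p : QD.PathIn Q, n ≤ p.2.2.length ∧ u = PA.ι p.2.2

/-- The truncated quiver algebra `A = KΔ/R_Δ^n`. -/
abbrev TA : Type := RingQuot (truncRel K Q n PA)

/-- The class in `A = KΔ/R_Δ^n` of a path of `Δ`. -/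
def cls {i j : Q.V} (p : Q.Path i j) : TA K Q n PA :=
  RingQuot.mkAlgHom K (truncRel K Q n PA) (PA.ι p)

/-- Index type for the canonical basis of the truncated algebra: paths of length `< n`. -/
abbrev Short : Type := {p : QD.PathIn Q // p.2.2.length < n}

/-- The Jacobson radical of the truncated algebra. -/
def JradA : Ideal (TA K Q n PA) := Ideal.jacobson ⊥

/-- The socle of `A` as an `A`-bimodule: the two-sided annihilator of the radical,
viewed as a `K`-subspace. -/
def socA : Submodule K (TA K Q n PA) where
  carrier := {z | ∀ r ∈ JradA K Q n PA, r * z = 0 ∧ z * r = 0}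
  add_mem' := by
    intro a b ha hb r hr
    exact ⟨by rw [mul_add, (ha r hr).1, (hb r hr).1, add_zero],
      by rw [add_mul, (ha r hr).2, (hb r hr).2, add_zero]⟩
  zero_mem' := by intro r hr; simp
  smul_mem' := by
    intro c z hz r hr
    exact ⟨by rw [Algebra.mul_smul_comm, (hz r hr).1, smul_zero],
      by rw [Algebra.smul_mul_assoc, (hz r hr).2, smul_zero]⟩

variable (basA : Module.Basis (Short Q n) K (TA K Q n PA))

/-- The dual-basis functional `p̄^*` attached to a path `p` (zero if `p` is long). -/
def coordP (p : QD.PathIn Q) : Module.Dual K (TA K Q n PA) :=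
  if h : p.2.2.length < n then basA.coord ⟨p, h⟩ else 0

variable (s : ℕ) [NeZero s] (w : ZMod s → Q.V) (x : ∀ i : ZMod s, Q.Ar (w i) (w (i + 1)))

/-- The segment `x_i x_{i+1} ⋯ x_{i+m-1}` of the fixed basic cycle `γ = x_1 ⋯ x_s`. -/
def seg : (i : ZMod s) → (m : ℕ) → Q.Path (w i) (w (i + (m : ZMod s)))
  | i, 0 => cast (congrArg (fun v : ZMod s => Q.Path (w i) (w v)) (by push_cast; ring))
      (QD.Path.nil (w i))
  | i, m + 1 => cast (congrArg (fun v : ZMod s => Q.Path (w i) (w v)) (by push_cast; ring))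
      (QD.Path.cons (x i) (seg (i + 1) m))

variable (k : K)

/-- The value `α_r(ā, b̄)` of the `r`-th summand of the `2`-cocycle attached to `γ`. -/
def aTerm {i j l : Q.V} (a : Q.Path i j) (b : Q.Path j l) (r : ZMod s) :
    Module.Dual K (TA K Q n PA) :=
  if (cls K Q n PA a ≠ 0 ∧ cls K Q n PA b ≠ 0 ∧ n ≤ (a.comp b).length ∧ (a.comp b).length < s ∧
      (a.comp b).sig = (seg Q s w x r (a.comp b).length).sig) then
    coordP K Q n PA basA
      ((seg Q s w x (r + ((a.comp b).length : ZMod s)) (s - (a.comp b).length)).sig)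
  else if (cls K Q n PA a ≠ 0 ∧ cls K Q n PA b ≠ 0 ∧ (a.comp b).length = s ∧
      (a.comp b).sig = (seg Q s w x r s).sig) then
    coordP K Q n PA basA ((QD.Path.nil (w r)).sig)
  else 0

variable (αm : TA K Q n PA →ₗ[K] TA K Q n PA →ₗ[K] Module.Dual K (TA K Q n PA))
variable (t : ℕ) (pM : Fin t → QD.PathIn Q)

/-- The ordinary quiver of the Hochschild extension algebra: the quiver `Δ` together with
one extra arrow `y_{p_m} : t(p_m) → s(p_m)` for every `m`. -/
abbrev Qe : QD where
  V := Q.V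
  Ar := fun i j => Q.Ar i j ⊕ {m : Fin t // (pM m).2.1 = i ∧ (pM m).1 = j}

/-- The inclusion of paths of `Δ` into paths of the extended quiver. -/
def embed : {i j : Q.V} → Q.Path i j → (Qe Q t pM).Path i j
  | _, _, QD.Path.nil i => QD.Path.nil (Q := Qe Q t pM) i
  | _, _, QD.Path.cons a p => QD.Path.cons (Q := Qe Q t pM) (Sum.inl a) (embed p)

/-- The number of `y`-arrows occurring in a path of the extended quiver. -/
def numY : {i j : Q.V} → (Qe Q t pM).Path i j → ℕ
  | _, _, QD.Path.nil _ => 0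
  | i, _, @QD.Path.cons _ _ j' _ a p =>
      (match (a : Q.Ar i j' ⊕ {m : Fin t // (pM m).2.1 = i ∧ (pM m).1 = j'}) with
        | Sum.inl _ => 0
        | Sum.inr _ => 1) + numY p

/-- The arrow `y_{p_m}` of the extended quiver. -/
def yArr (m : Fin t) : (Qe Q t pM).Ar (pM m).2.1 (pM m).1 := Sum.inr ⟨m, rfl, rfl⟩

/-- `C` is an `α`-revived cycle of `Δ`. -/
def IsRev {h : Q.V} (C : Q.Path h h) : Prop :=
  ∃ (j : Q.V) (a : Q.Path h j) (b : Q.Path j h),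
    0 < a.length ∧ 0 < b.length ∧ cls K Q n PA a ≠ 0 ∧ cls K Q n PA b ≠ 0 ∧
    C = a.comp b ∧ αm (cls K Q n PA a) (cls K Q n PA b) ≠ 0

/-- `C` is an `α`-revived cycle, viewed inside the extended quiver. -/
def IsRevE {h : Q.V} (C : (Qe Q t pM).Path h h) : Prop :=
  ∃ C₀ : Q.Path h h, C = embed Q t pM C₀ ∧ IsRev K Q n PA αm C₀

/-- `C` is an elementary cycle of weight `wt`. -/
def IsElemW {h : Q.V} (C : (Qe Q t pM).Path h h) (wt : K) : Prop :=
  ∃ (m : Fin t) (δ₂ : Q.Path h (pM m).2.1) (δ₁ : Q.Path (pM m).1 h),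
    C = (embed Q t pM δ₂).comp (QD.Path.cons (yArr Q t pM m) (embed Q t pM δ₁)) ∧
    coordP K Q n PA basA (pM m) (cls K Q n PA (δ₁.comp δ₂)) = wt ∧ wt ≠ 0

/-- `C` is an elementary cycle. -/
def IsElem {h : Q.V} (C : (Qe Q t pM).Path h h) : Prop :=
  ∃ wt : K, IsElemW K Q n PA basA t pM C wt

/-- `C` is a nonzero cycle (elementary or `α`-revived) with weight `wt`. -/
def HasWt {h : Q.V} (C : (Qe Q t pM).Path h h) (wt : K) : Prop :=
  IsElemW K Q n PA basA t pM C wt ∨ (IsRevE K Q n PA αm t pM C ∧ wt = k)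

/-- The left action of `A` on `D(A) = Hom_K(A, K)`: `(a · f)(z) = f(z * a)`. -/
def dL (a : TA K Q n PA) (f : Module.Dual K (TA K Q n PA)) : Module.Dual K (TA K Q n PA) :=
  f ∘ₗ LinearMap.mulRight K a

/-- The right action of `A` on `D(A) = Hom_K(A, K)`: `(f · b)(z) = f(b * z)`. -/
def dR (f : Module.Dual K (TA K Q n PA)) (b : TA K Q n PA) : Module.Dual K (TA K Q n PA) :=
  f ∘ₗ LinearMap.mulLeft K b

variable (T : Type) [Ring T] [Algebra K T]
variable (eT : T ≃ₗ[K] TA K Q n PA × Module.Dual K (TA K Q n PA))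
variable (PB : PathAlg K (Qe Q t pM))
variable (Φm : PB.P →ₐ[K] T)

/-- `φ₁ = π₁ ∘ Φ`. -/
def ph1 (z : PB.P) : TA K Q n PA := (eT (Φm z)).1

/-- `φ₂ = π₂ ∘ Φ`. -/
def ph2 (z : PB.P) : Module.Dual K (TA K Q n PA) := (eT (Φm z)).2

/-- The primitive idempotent of `T` corresponding to a vertex. -/
def eV (i : Q.V) : T := eT.symm (cls K Q n PA (QD.Path.nil i), 0)

end Main

section Extra

variable (K : Type) [Field K] (Q : QD) [Fintype Q.V] [∀ i j : Q.V, Fintype (Q.Ar i j)]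
variable (n : ℕ) (PA : PathAlg K Q)
variable (t : ℕ) (pM : Fin t → QD.PathIn Q)
variable (T : Type) [Ring T] [Algebra K T]
variable (PB : PathAlg K (Qe Q t pM))
variable (Φm : PB.P →ₐ[K] T)

/-- The Jacobson radical of a ring. -/
def JT : Ideal T := Ideal.jacobson ⊥

/-- The Jacobson radical, viewed as a `K`-subspace. -/
def JTK : Submodule K T := Submodule.restrictScalars K (JT T)

/-- The square of the Jacobson radical, as a `K`-subspace. -/
def J2K : Submodule K T := JTK K T * JTK K T

/-- The number of arrows `i → j` in the Gabriel (ordinary) quiver of `T`,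
i.e. `dim_K e_i (rad T / rad² T) e_j`. -/
def gabrielCount (ei ej : T) : ℕ :=
  Module.finrank K
      ↥(Submodule.span K {y : T | ∃ z ∈ JT T, y = ei * z * ej} ⊔ J2K K T)
    - Module.finrank K ↥(J2K K T)

/-- `e` is a primitive idempotent. -/
def IsPrimIdem (e : T) : Prop :=
  e * e = e ∧ e ≠ 0 ∧
  ∀ f g : T, f * f = f → g * g = g → f * g = 0 → g * f = 0 → e = f + g → f = 0 ∨ g = 0

/-- `a` is an arrow of the ring `T` in the sense of Brenner:
`a ∈ rad T \ rad² T` and `a = x a y` for primitive idempotents `x, y`. -/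
def IsArrowT (a : T) : Prop :=
  a ∈ JT T ∧ a ∉ J2K K T ∧
  ∃ e f : T, IsPrimIdem T e ∧ IsPrimIdem T f ∧ a = e * a * f

/-- `rad (T e)`, a left submodule. -/
def radLe (e : T) : Submodule T T := Submodule.span T ((fun z => z * e) '' (JT T : Set T))

/-- `rad (e T)`, a right submodule. -/
def radRe (e : T) : Submodule Tᵐᵒᵖ T := Submodule.span Tᵐᵒᵖ ((fun z => e * z) '' (JT T : Set T))

/-- `Λ` is a complete set of arrows for `rad (T e)`. -/
def CompleteL (e : T) (Λ : Set T) : Prop :=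
  (∀ a ∈ Λ, IsArrowT K T a) ∧ Submodule.span T Λ = radLe T e ∧
  ∀ Λ' ⊂ Λ, Submodule.span T Λ' ≠ radLe T e

/-- `Γ` is a complete set of arrows for `rad (e T)`. -/
def CompleteR (e : T) (Γ : Set T) : Prop :=
  (∀ a ∈ Γ, IsArrowT K T a) ∧ Submodule.span Tᵐᵒᵖ Γ = radRe T e ∧
  ∀ Γ' ⊂ Γ, Submodule.span Tᵐᵒᵖ Γ' ≠ radRe T e

/-- `(N, nn) ∈ 𝒩` in the sense of Brenner, for the primitive idempotent `e`. -/
def mcN (e : T) (N nn : ℕ) : Prop :=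
  ∃ Λ Γ : Fin (nn + 1) → Set T,
    (∀ i : Fin (nn + 1), (i : ℕ) ≠ 0 → (Λ i).Nonempty ∧ (Γ i).Nonempty) ∧
    (∀ i j : Fin (nn + 1), i ≠ j → Λ i ∩ Λ j = ∅ ∧ Γ i ∩ Γ j = ∅) ∧
    CompleteL K T e (⋃ i, Λ i) ∧ CompleteR K T e (⋃ i, Γ i) ∧
    (∀ i j : Fin (nn + 1), (i ≠ j ∨ (i : ℕ) = 0 ∨ (j : ℕ) = 0) →
      ∀ a ∈ Λ i, ∀ b ∈ Γ j, a * b = 0) ∧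
    N = nn + (Λ 0).ncard

/-- The set `𝒞_h` of oriented cycles at `h` of the extended quiver that are
nonzero in the Hochschild extension algebra. -/
def Ch (h : Q.V) : Type :=
  {C : (Qe Q t pM).Path h h // 0 < C.length ∧ Φm (PB.ι C) ≠ 0}

/-- The relation `ℛ` on `𝒞_h`: the two cycles share an arrow which starts or ends at `h`. -/
def Rc (h : Q.V) (C C' : Ch K Q t pM T PB Φm h) : Prop :=
  ∃ (u v : Q.V) (a : (Qe Q t pM).Ar u v), (u = h ∨ v = h) ∧
    QD.Path.arrowMem a C.1 ∧ QD.Path.arrowMem a C'.1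

/-- `card (𝒞_h / ≡)`, the number of equivalence classes of `𝒞_h` under the equivalence
relation generated by `ℛ`. -/
def NCh (h : Q.V) : ℕ := Nat.card (Quot (Rc K Q t pM T PB Φm h))

/-- The set `𝒜_h` of arrows of the extended quiver ending at `h`. -/
def Ah (h : Q.V) : Type := Σ u : Q.V, (Qe Q t pM).Ar u h

/-- The relation `ℛ'` on `𝒜_h`: there is an arrow `b` with `ab ≠ 0 ≠ a'b` in `T_α(A)`. -/
def Ra (h : Q.V) (a a' : Ah Q t pM h) : Prop :=
  ∃ (v : Q.V) (b : (Qe Q t pM).Ar h v),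
    Φm (PB.ι (QD.Path.cons a.2 (QD.Path.cons b (QD.Path.nil (Q := Qe Q t pM) v)))) ≠ 0 ∧
    Φm (PB.ι (QD.Path.cons a'.2 (QD.Path.cons b (QD.Path.nil (Q := Qe Q t pM) v)))) ≠ 0

/-- `card (𝒜_h / ≈)`. -/
def NAh (h : Q.V) : ℕ := Nat.card (Quot (Ra K Q t pM T PB Φm h))

end Extra

/-- An `R`-module is indecomposable if it is nonzero and is not the internal direct
sum of two nonzero submodules. -/
def Indec (R M : Type) [Ring R] [AddCommGroup M] [Module R M] : Prop :=
  (⊥ : Submodule R M) ≠ ⊤ ∧ ∀ p q : Submodule R M, IsCompl p q → p = ⊥ ∨ q = ⊥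


section MyHelpers

namespace QD.Path

variable {Q : QD}

theorem my_length_comp : ∀ {i j k : Q.V} (p : Path Q i j) (q : Path Q j k),
    (p.comp q).length = p.length + q.length := by
  intro i j k p q
  induction p with
  | nil => simp [comp, length]
  | cons a p ih => simp [comp, length, ih]; omega

theorem my_comp_assoc : ∀ {i j k l : Q.V} (p : Path Q i j) (q : Path Q j k) (r : Path Q k l),
    (p.comp q).comp r = p.comp (q.comp r) := by
  intro i j k l p q r
  induction p with
  | nil => rfl
  | cons a p ih => simp [comp, ih]

theorem my_comp_nil : ∀ {i j : Q.V} (p : Path Q i j), p.comp (nil j) = p := by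
  intro i j p
  induction p with
  | nil => rfl
  | cons a p ih => simp [comp, ih]

theorem my_sig_self (p : QD.PathIn Q) : (p.2.2).sig = p := rfl

theorem my_sig_length {i j u w : Q.V} {p : Path Q i j} {q : Path Q u w} (h : p.sig = q.sig) :
    p.length = q.length :=
  congrArg (fun x : QD.PathIn Q => x.2.2.length) h

theorem my_sig_eq_nil_iff {i j i₀ : Q.V} (p : Path Q i j) :
    p.sig = (nil i₀ : Path Q i₀ i₀).sig ↔ p.length = 0 ∧ i = i₀ := by
  constructor
  · intro h
    exact ⟨my_sig_length h, congrArg (fun x : QD.PathIn Q => x.1) h⟩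
  · rintro ⟨hl, rfl⟩
    cases p with
    | nil => rfl
    | cons a p => simp [length] at hl

theorem my_snd_eq_of_length_zero {i j : Q.V} (p : Path Q i j) (h : p.length = 0) : j = i := by
  have := (my_sig_eq_nil_iff (i₀ := i) p).2 ⟨h, rfl⟩
  exact congrArg (fun x : QD.PathIn Q => x.2.1) this

end QD.Path

theorem my_embed_comp (Q : QD) (t : ℕ) (pM : Fin t → QD.PathIn Q)
    {i j k : Q.V} (p : Q.Path i j) (q : Q.Path j k) :
    embed Q t pM (p.comp q) = (embed Q t pM p).comp (embed Q t pM q) := by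
  induction p with
  | nil => rfl
  | cons a p ih => simp [QD.Path.comp, embed, ih]

section ClsLemmas

variable (K : Type) [Field K] (Q : QD) [Fintype Q.V] (n : ℕ) (PA : PathAlg K Q)

theorem my_cls_comp {i j k : Q.V} (p : Q.Path i j) (q : Q.Path j k) :
    cls K Q n PA (p.comp q) = cls K Q n PA p * cls K Q n PA q := by
  unfold cls; rw [PA.ι_comp, map_mul]

theorem my_cls_ortho {i j k l : Q.V} (p : Q.Path i j) (q : Q.Path k l) (h : j ≠ k) :
    cls K Q n PA p * cls K Q n PA q = 0 := by
  unfold cls; rw [← map_mul, PA.ι_ortho p q h, map_zero]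

theorem my_cls_long {i j : Q.V} (p : Q.Path i j) (h : n ≤ p.length) :
    cls K Q n PA p = 0 := by
  unfold cls
  have hrel : truncRel K Q n PA (PA.ι p) 0 := ⟨rfl, ⟨⟨i, j, p⟩, h, rfl⟩⟩
  rw [RingQuot.mkAlgHom_rel K hrel, map_zero]

theorem my_cls_one : (1 : TA K Q n PA) = ∑ i : Q.V, cls K Q n PA (QD.Path.nil i) := by
  unfold cls
  rw [← map_sum, PA.sum_nil, map_one]

variable (basA : Module.Basis (Short Q n) K (TA K Q n PA))
variable (hbas : ∀ sp : Short Q n, basA sp = cls K Q n PA sp.1.2.2)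

theorem my_coordP_eq (P : QD.PathIn Q) (hP : P.2.2.length < n) :
    coordP K Q n PA basA P = basA.coord ⟨P, hP⟩ := dif_pos hP

include hbas in
theorem my_coordP_cls (P : QD.PathIn Q) (hP : P.2.2.length < n) {u w : Q.V} (p : Q.Path u w) :
    coordP K Q n PA basA P (cls K Q n PA p) = if p.sig = P then 1 else 0 := by
  unfold coordP
  rw [dif_pos hP]
  by_cases hlen : p.length < n
  · have h1 : cls K Q n PA p = basA ⟨p.sig, hlen⟩ := (hbas ⟨p.sig, hlen⟩).symm
    rw [h1, Module.Basis.coord_apply, Module.Basis.repr_self, Finsupp.single_apply]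
    by_cases h2 : p.sig = P
    · rw [if_pos (Subtype.ext h2), if_pos h2]
    · rw [if_neg (fun hc => h2 (Subtype.ext_iff.1 hc)), if_neg h2]
  · rw [my_cls_long K Q n PA p (le_of_not_gt hlen), map_zero, if_neg]
    intro h
    have : p.length = P.2.2.length := congrArg (fun x : QD.PathIn Q => x.2.2.length) h
    omega

include hbas in
theorem my_coordP_nil_mul (i₀ : Q.V) (h0 : 0 < n)
    {ip jp iq jq : Q.V} (p : Q.Path ip jp) (q : Q.Path iq jq) :
    coordP K Q n PA basA (QD.Path.nil i₀ : Q.Path i₀ i₀).sig (cls K Q n PA p * cls K Q n PA q)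
      = coordP K Q n PA basA (QD.Path.nil i₀ : Q.Path i₀ i₀).sig (cls K Q n PA p) *
        coordP K Q n PA basA (QD.Path.nil i₀ : Q.Path i₀ i₀).sig (cls K Q n PA q) := by
  have hnil : ((QD.Path.nil i₀ : Q.Path i₀ i₀).sig).2.2.length < n := h0
  rw [my_coordP_cls K Q n PA basA hbas _ hnil p, my_coordP_cls K Q n PA basA hbas _ hnil q]
  by_cases hjq : jp = iq
  · subst hjq
    rw [← my_cls_comp, my_coordP_cls K Q n PA basA hbas _ hnil]
    by_cases h1 : p.sig = (QD.Path.nil i₀ : Q.Path i₀ i₀).sig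
    · by_cases h2 : q.sig = (QD.Path.nil i₀ : Q.Path i₀ i₀).sig
      · rw [if_pos h1, if_pos h2, if_pos, mul_one]
        obtain ⟨hl1, hi1⟩ := (QD.Path.my_sig_eq_nil_iff p).1 h1
        obtain ⟨hl2, _⟩ := (QD.Path.my_sig_eq_nil_iff q).1 h2
        exact (QD.Path.my_sig_eq_nil_iff _).2
          ⟨by rw [QD.Path.my_length_comp]; omega, hi1⟩
      · rw [if_neg h2, mul_zero, if_neg]
        intro hc
        obtain ⟨hlc, hic⟩ := (QD.Path.my_sig_eq_nil_iff _).1 hc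
        rw [QD.Path.my_length_comp] at hlc
        have hl1 : p.length = 0 := by omega
        have hl2 : q.length = 0 := by omega
        have hjp : jp = ip := QD.Path.my_snd_eq_of_length_zero p hl1
        exact h2 ((QD.Path.my_sig_eq_nil_iff q).2 ⟨hl2, hjp.trans hic⟩)
    · rw [if_neg h1, zero_mul, if_neg]
      intro hc
      obtain ⟨hlc, hic⟩ := (QD.Path.my_sig_eq_nil_iff _).1 hc
      rw [QD.Path.my_length_comp] at hlc
      have hl1 : p.length = 0 := by omega
      exact h1 ((QD.Path.my_sig_eq_nil_iff p).2 ⟨hl1, hic⟩)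
  · rw [my_cls_ortho K Q n PA p q hjq, map_zero]
    by_cases h1 : p.sig = (QD.Path.nil i₀ : Q.Path i₀ i₀).sig
    · rw [if_pos h1, if_neg, mul_zero]
      intro h2
      have hjp : jp = i₀ := congrArg (fun x : QD.PathIn Q => x.2.1) h1
      have hiq : iq = i₀ := congrArg (fun x : QD.PathIn Q => x.1) h2
      exact hjq (hjp.trans hiq.symm)
    · rw [if_neg h1, zero_mul]

include hbas in
theorem my_jrad_coord_zero (h0 : 0 < n) (i₀ : Q.V) (r : TA K Q n PA)
    (hr : r ∈ JradA K Q n PA) :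
    coordP K Q n PA basA (QD.Path.nil i₀ : Q.Path i₀ i₀).sig r = 0 := by
  set f : TA K Q n PA →ₗ[K] K := coordP K Q n PA basA (QD.Path.nil i₀ : Q.Path i₀ i₀).sig
    with hf
  have hnil : ((QD.Path.nil i₀ : Q.Path i₀ i₀).sig).2.2.length < n := h0
  have hmul : ∀ x y : TA K Q n PA, f (x * y) = f x * f y := by
    have hext : LinearMap.compr₂ (LinearMap.mul K (TA K Q n PA)) f
        = (LinearMap.mul K K).compl₁₂ f f := by
      apply basA.ext; intro p
      apply basA.ext; intro q
      simp only [LinearMap.compr₂_apply, LinearMap.mul_apply', LinearMap.compl₁₂_apply]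
      rw [hbas p, hbas q]
      obtain ⟨⟨ip, jp, pp⟩, hp⟩ := p
      obtain ⟨⟨iq, jq, qq⟩, hq⟩ := q
      exact my_coordP_nil_mul K Q n PA basA hbas i₀ h0 pp qq
    intro x y
    have := LinearMap.congr_fun (LinearMap.congr_fun hext x) y
    simpa only [LinearMap.compr₂_apply, LinearMap.mul_apply', LinearMap.compl₁₂_apply] using this
  have hone : f 1 = 1 := by
    rw [my_cls_one K Q n PA, map_sum]
    have hterm : ∀ i : Q.V, f (cls K Q n PA (QD.Path.nil i)) = if i = i₀ then 1 else 0 := by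
      intro i
      rw [hf, my_coordP_cls K Q n PA basA hbas _ hnil]
      by_cases h : i = i₀
      · subst h; rw [if_pos rfl, if_pos rfl]
      · rw [if_neg h, if_neg (fun hc => h (((QD.Path.my_sig_eq_nil_iff _).1 hc).2))]
    rw [Finset.sum_congr rfl (fun i _ => hterm i)]
    simp
  let M : Ideal (TA K Q n PA) :=
    { carrier := {x | f x = 0}
      add_mem' := fun {a b} ha hb => by
        simp only [Set.mem_setOf_eq] at *
        rw [map_add, ha, hb, add_zero]
      zero_mem' := map_zero f
      smul_mem' := fun c x hx => by
        simp only [Set.mem_setOf_eq] at *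
        rw [smul_eq_mul, hmul, hx, mul_zero] }
  have hMmem : ∀ x : TA K Q n PA, x ∈ M ↔ f x = 0 := fun x => Iff.rfl
  have hMmax : M.IsMaximal := by
    constructor
    constructor
    · intro hM
      have h1M : (1 : TA K Q n PA) ∈ M := hM ▸ Submodule.mem_top
      rw [hMmem, hone] at h1M
      exact one_ne_zero h1M
    · intro J hJ
      obtain ⟨x, hxJ, hxM⟩ := SetLike.exists_of_lt hJ
      have hfx : f x ≠ 0 := fun hc => hxM ((hMmem x).2 hc)
      have hy : (1 - (f x)⁻¹ • x) ∈ M := by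
        rw [hMmem, map_sub, map_smul, hone, smul_eq_mul, inv_mul_cancel₀ hfx, sub_self]
      have h1J : (1 : TA K Q n PA) ∈ J := by
        have h2 : ((f x)⁻¹ • x) ∈ J := by
          rw [Algebra.smul_def]
          exact J.mul_mem_left _ hxJ
        have h3 : (1 - (f x)⁻¹ • x) ∈ J := hJ.le hy
        have h4 := J.add_mem h3 h2
        simpa using h4
      exact (Ideal.eq_top_iff_one J).2 h1J
  have hle : JradA K Q n PA ≤ M := sInf_le ⟨bot_le, hMmax⟩
  exact (hMmem r).1 (hle hr)

end ClsLemmas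

end MyHelpers

section Statements

variable (K : Type) [Field K] (Q : QD) [Fintype Q.V] [∀ i j : Q.V, Fintype (Q.Ar i j)]
variable (n : ℕ) (PA : PathAlg K Q)
variable (basA : Module.Basis (Short Q n) K (TA K Q n PA))
variable (s : ℕ) [NeZero s] (w : ZMod s → Q.V) (x : ∀ i : ZMod s, Q.Ar (w i) (w (i + 1)))
variable (k : K)
variable (αm : TA K Q n PA →ₗ[K] TA K Q n PA →ₗ[K] Module.Dual K (TA K Q n PA))
variable (t : ℕ) (pM : Fin t → QD.PathIn Q)
variable (T : Type) [Ring T] [Algebra K T]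
variable (eT : T ≃ₗ[K] TA K Q n PA × Module.Dual K (TA K Q n PA))
variable (PB : PathAlg K (Qe Q t pM))
variable (Φm : PB.P →ₐ[K] T)

/-- every path of `Δ` which is nonzero in `A` admits paths `δ₁, δ₂` and
`p_m ∈ 𝕄` with `p̄_m^*(δ₁ v δ₂) ≠ 0`; in particular it is contained in an elementary cycle. -/
theorem stmt1
    [IsAlgClosed K]
    (hn : 2 ≤ n)
    (hdim : 1 < Module.finrank K (TA K Q n PA))
    (hconn : ∀ i j : Q.V,
      Relation.EqvGen (fun u v : Q.V => Nonempty (Q.Ar u v) ∨ Nonempty (Q.Ar v u)) i j)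
    (hcyc : ∀ (i : Q.V) (p : Q.Path i i), 0 < p.length → cls K Q n PA p = 0)
    (hbas : ∀ sp : Short Q n, basA sp = cls K Q n PA sp.1.2.2)
    (hs1 : n + 1 ≤ s) (hs2 : s ≤ 2 * n - 2)
    (hk : k ≠ 0)
    (hα : ∀ {i j l : Q.V} (a : Q.Path i j) (b : Q.Path j l),
      αm (cls K Q n PA a) (cls K Q n PA b) =
        k • ∑ r : ZMod s, aTerm K Q n PA basA s w x a b r)
    (hcoc : ∀ a b c : TA K Q n PA,
      dL K Q n PA a (αm b c) + αm a (b * c) = αm (a * b) c + dR K Q n PA (αm a b) c)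
    (hMlt : ∀ m : Fin t, (pM m).2.2.length < n)
    (hMli : LinearIndependent K fun m : Fin t => cls K Q n PA (pM m).2.2)
    (hMsp : Submodule.span K (Set.range fun m : Fin t => cls K Q n PA (pM m).2.2)
      = socA K Q n PA)
    (hTmul : ∀ u v : T, eT (u * v) = ((eT u).1 * (eT v).1,
      dL K Q n PA (eT u).1 (eT v).2 + dR K Q n PA (eT u).2 (eT v).1 + αm (eT u).1 (eT v).1))
    (hTone : eT 1 = (1, 0))
    (hΦnil : ∀ i : Q.V, Φm (PB.ι (QD.Path.nil (Q := Qe Q t pM) i))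
      = eT.symm (cls K Q n PA (QD.Path.nil i), 0))
    (hΦarr : ∀ {i j : Q.V} (a : Q.Ar i j),
      Φm (PB.ι (QD.Path.cons (Sum.inl a) (QD.Path.nil (Q := Qe Q t pM) j)))
      = eT.symm (cls K Q n PA (QD.Path.cons a (QD.Path.nil j)), 0))
    (hΦy : ∀ m : Fin t,
      Φm (PB.ι (QD.Path.cons (yArr Q t pM m) (QD.Path.nil (Q := Qe Q t pM) (pM m).1)))
      = eT.symm (0, coordP K Q n PA basA (pM m)))
    (hΦsurj : Function.Surjective Φm)
    {i j : Q.V} (v : Q.Path i j) (hv : cls K Q n PA v ≠ 0) :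
    (∃ (m : Fin t) (δ₁ : Q.Path (pM m).1 i) (δ₂ : Q.Path j (pM m).2.1),
      coordP K Q n PA basA (pM m) (cls K Q n PA ((δ₁.comp v).comp δ₂)) ≠ 0) ∧
    ∃ (h : Q.V) (C : (Qe Q t pM).Path h h) (γ₁ : (Qe Q t pM).Path h i)
      (γ₂ : (Qe Q t pM).Path j h),
      IsElem K Q n PA basA t pM C ∧ C = γ₁.comp ((embed Q t pM v).comp γ₂) := by
  classical
  have h0 : 0 < n := by omega
  set Pr : ℕ → Prop := fun ℓ => ∃ (a b : Q.V) (d1 : Q.Path a i) (d2 : Q.Path j b),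
    cls K Q n PA ((d1.comp v).comp d2) ≠ 0 ∧ ((d1.comp v).comp d2).length = ℓ with hPdef
  have hP0 : Pr v.length := by
    refine ⟨i, j, QD.Path.nil i, QD.Path.nil j, ?_, ?_⟩
    · rw [show ((QD.Path.nil i).comp v).comp (QD.Path.nil j) = v from QD.Path.my_comp_nil v]
      exact hv
    · rw [show ((QD.Path.nil i).comp v).comp (QD.Path.nil j) = v from QD.Path.my_comp_nil v]
  have hPlt : ∀ ℓ, Pr ℓ → ℓ < n := by
    rintro ℓ ⟨a, b, d1, d2, hne, rfl⟩
    by_contra hge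
    exact hne (my_cls_long K Q n PA _ (le_of_not_gt hge))
  set L := Nat.findGreatest Pr n with hL
  have hPL : Pr L := Nat.findGreatest_spec (le_of_lt (hPlt _ hP0)) hP0
  have hgt : ∀ ℓ, L < ℓ → ¬ Pr ℓ := by
    intro ℓ hℓ hPl
    rcases le_or_gt ℓ n with hc | hc
    · exact Nat.findGreatest_is_greatest hℓ hc hPl
    · exact absurd (hPlt _ hPl) (by omega)
  obtain ⟨a, b, d1, d2, hδne, hδlen⟩ := hPL
  set δ : Q.Path a b := (d1.comp v).comp d2 with hδ
  have hδlt : δ.length < n := hPlt _ ⟨a, b, d1, d2, hδne, rfl⟩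
  set z := cls K Q n PA δ with hz
  have hmaxL : ∀ (u w : Q.V) (q : Q.Path u w), 0 < q.length → cls K Q n PA q * z = 0 := by
    intro u w q hq
    by_cases huw : w = a
    · subst huw
      rw [hz, ← my_cls_comp]
      have hassoc : q.comp δ = ((q.comp d1).comp v).comp d2 := by
        rw [hδ, ← QD.Path.my_comp_assoc, ← QD.Path.my_comp_assoc]
      rw [hassoc]
      by_contra hne
      have hlen2 : (((q.comp d1).comp v).comp d2).length = q.length + L := by
        have h1 : δ.length = L := hδlen
        rw [hδ, QD.Path.my_length_comp, QD.Path.my_length_comp] at h1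
        rw [QD.Path.my_length_comp, QD.Path.my_length_comp, QD.Path.my_length_comp]
        omega
      exact hgt _ (by omega) ⟨u, b, q.comp d1, d2, hne, hlen2⟩
    · exact my_cls_ortho K Q n PA q δ huw
  have hmaxR : ∀ (u w : Q.V) (q : Q.Path u w), 0 < q.length → z * cls K Q n PA q = 0 := by
    intro u w q hq
    by_cases hbu : b = u
    · subst hbu
      rw [hz, ← my_cls_comp]
      have hassoc : δ.comp q = (d1.comp v).comp (d2.comp q) := by
        rw [hδ, QD.Path.my_comp_assoc]
      rw [hassoc]
      by_contra hne
      have hlen2 : ((d1.comp v).comp (d2.comp q)).length = q.length + L := by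
        have h1 : δ.length = L := hδlen
        rw [hδ, QD.Path.my_length_comp, QD.Path.my_length_comp] at h1
        rw [QD.Path.my_length_comp, QD.Path.my_length_comp, QD.Path.my_length_comp]
        omega
      exact hgt _ (by omega) ⟨a, w, d1, d2.comp q, hne, hlen2⟩
    · exact my_cls_ortho K Q n PA δ q hbu
  have hzsoc : z ∈ socA K Q n PA := by
    intro r hr
    have hcoefz : ∀ p : Short Q n, p.1.2.2.length = 0 → basA.repr r p = 0 := by
      intro p hp0
      have hsig : p.1.2.2.sig = (QD.Path.nil p.1.1 : Q.Path p.1.1 p.1.1).sig :=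
        (QD.Path.my_sig_eq_nil_iff p.1.2.2).2 ⟨hp0, rfl⟩
      have hsig' : p.1 = (QD.Path.nil p.1.1 : Q.Path p.1.1 p.1.1).sig := by
        rw [← QD.Path.my_sig_self p.1]; exact hsig
      have hcz := my_jrad_coord_zero K Q n PA basA hbas h0 p.1.1 r hr
      rw [my_coordP_eq K Q n PA basA (QD.Path.nil p.1.1 : Q.Path p.1.1 p.1.1).sig h0, Module.Basis.coord_apply] at hcz
      have hpe : p = (⟨(QD.Path.nil p.1.1 : Q.Path p.1.1 p.1.1).sig, h0⟩ : Short Q n) :=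
        Subtype.ext hsig'
      rw [hpe]
      exact hcz
    constructor
    · conv_lhs => rw [← basA.linearCombination_repr r]
      rw [Finsupp.linearCombination_apply, Finsupp.sum, Finset.sum_mul]
      apply Finset.sum_eq_zero
      intro p _
      rw [smul_mul_assoc]
      rcases Nat.eq_zero_or_pos p.1.2.2.length with hp0 | hppos
      · rw [hcoefz p hp0, zero_smul]
      · rw [hbas p, hmaxL _ _ _ hppos, smul_zero]
    · conv_lhs => rw [← basA.linearCombination_repr r]
      rw [Finsupp.linearCombination_apply, Finsupp.sum, Finset.mul_sum]
      apply Finset.sum_eq_zero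
      intro p _
      rw [mul_smul_comm]
      rcases Nat.eq_zero_or_pos p.1.2.2.length with hp0 | hppos
      · rw [hcoefz p hp0, zero_smul]
      · rw [hbas p, hmaxR _ _ _ hppos, smul_zero]
  have hzspan : z ∈ Submodule.span K (Set.range fun m : Fin t => cls K Q n PA (pM m).2.2) := by
    rw [hMsp]; exact hzsoc
  have hex : ∃ m : Fin t, pM m = δ.sig := by
    by_contra hne
    push_neg at hne
    have hker : ∀ m : Fin t, coordP K Q n PA basA δ.sig (cls K Q n PA (pM m).2.2) = 0 := by
      intro m
      rw [my_coordP_cls K Q n PA basA hbas δ.sig hδlt, if_neg]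
      intro hc
      rw [QD.Path.my_sig_self (pM m)] at hc
      exact hne m hc
    have hle : Submodule.span K (Set.range fun m : Fin t => cls K Q n PA (pM m).2.2)
        ≤ LinearMap.ker (coordP K Q n PA basA δ.sig) := by
      rw [Submodule.span_le]
      rintro _ ⟨m, rfl⟩
      exact hker m
    have hzero : coordP K Q n PA basA δ.sig z = 0 := hle hzspan
    rw [hz, my_coordP_cls K Q n PA basA hbas δ.sig hδlt δ, if_pos rfl] at hzero
    exact one_ne_zero hzero
  obtain ⟨m, hm⟩ := hex
  have main : ∀ p : QD.PathIn Q, p = δ.sig →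
      ∃ (e1 : Q.Path p.1 i) (e2 : Q.Path j p.2.1),
        coordP K Q n PA basA p (cls K Q n PA ((e1.comp v).comp e2)) ≠ 0 := by
    rintro p rfl
    refine ⟨d1, d2, ?_⟩
    show coordP K Q n PA basA δ.sig (cls K Q n PA δ) ≠ 0
    rw [my_coordP_cls K Q n PA basA hbas δ.sig hδlt δ, if_pos rfl]
    exact one_ne_zero
  obtain ⟨e1, e2, hcoord⟩ := main (pM m) hm
  refine ⟨⟨m, e1, e2, hcoord⟩, ?_⟩
  refine ⟨(pM m).1,
    (embed Q t pM ((e1.comp v).comp e2)).comp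
      (QD.Path.cons (yArr Q t pM m) (embed Q t pM (QD.Path.nil (pM m).1))),
    embed Q t pM e1,
    (embed Q t pM e2).comp
      (QD.Path.cons (yArr Q t pM m) (embed Q t pM (QD.Path.nil (pM m).1))),
    ⟨_, m, (e1.comp v).comp e2, QD.Path.nil (pM m).1, rfl, rfl, hcoord⟩, ?_⟩
  rw [my_embed_comp Q t pM, my_embed_comp Q t pM, QD.Path.my_comp_assoc,
    QD.Path.my_comp_assoc]

end Statements
end
end

section
/- If C = a_1 a_2 ⋯ a_j with a_1,…,a_j arrows of Δ is an α-revived cycle, then the cyclic rotation a_2 a_3 ⋯ a_j a_1 is also an α-revived cycle. -/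
noncomputable section
open Classical

section AuxRot
set_option linter.unusedSectionVars false

variable {Q : QD}

/-- The list of arrows of a path, each bundled with its endpoints. -/
def arrowsOf : {i j : Q.V} → Q.Path i j → List (Σ u : Q.V, Σ v : Q.V, Q.Ar u v)
  | _, _, QD.Path.nil _ => []
  | _, _, QD.Path.cons a p => ⟨_, _, a⟩ :: arrowsOf p

lemma arrowsOf_comp : ∀ {i j l : Q.V} (p : Q.Path i j) (q : Q.Path j l),
    arrowsOf (p.comp q) = arrowsOf p ++ arrowsOf q
  | _, _, _, QD.Path.nil _, _ => rfl
  | _, _, _, QD.Path.cons a p, q => by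
      simp only [QD.Path.comp, arrowsOf, arrowsOf_comp p q, List.cons_append]

lemma length_arrowsOf : ∀ {i j : Q.V} (p : Q.Path i j), (arrowsOf p).length = p.length
  | _, _, QD.Path.nil _ => rfl
  | _, _, QD.Path.cons a p => by
      simp only [arrowsOf, QD.Path.length, List.length_cons, length_arrowsOf p]

lemma eq_of_arrowsOf : ∀ {i j : Q.V} (p q : Q.Path i j), arrowsOf p = arrowsOf q → p = q
  | _, _, QD.Path.nil _, QD.Path.nil _, _ => rfl
  | _, _, QD.Path.nil _, QD.Path.cons _ _, h => by simp [arrowsOf] at h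
  | _, _, QD.Path.cons _ _, QD.Path.nil _, h => by simp [arrowsOf] at h
  | i, j, QD.Path.cons a p, QD.Path.cons b q, h => by
      simp only [arrowsOf, List.cons.injEq] at h
      obtain ⟨h1, h2⟩ := h
      obtain ⟨-, h1⟩ := Sigma.mk.inj_iff.mp h1
      obtain ⟨rfl, h1⟩ := Sigma.mk.inj_iff.mp (eq_of_heq h1)
      rw [eq_of_heq h1, eq_of_arrowsOf p q h2]

lemma sig_eq_iff {i j i' j' : Q.V} (p : Q.Path i j) (q : Q.Path i' j') :
    p.sig = q.sig ↔ i = i' ∧ j = j' ∧ arrowsOf p = arrowsOf q := by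
  constructor
  · intro h
    exact ⟨congrArg (fun z : QD.PathIn Q => z.1) h,
      congrArg (fun z : QD.PathIn Q => z.2.1) h,
      congrArg (fun z : QD.PathIn Q => arrowsOf z.2.2) h⟩
  · rintro ⟨rfl, rfl, h⟩
    rw [eq_of_arrowsOf p q h]

lemma length_congr_sig {i j i' j' : Q.V} {p : Q.Path i j} {q : Q.Path i' j'}
    (h : p.sig = q.sig) : p.length = q.length :=
  congrArg (fun z : QD.PathIn Q => z.2.2.length) h

lemma comp_assoc : ∀ {i j l m : Q.V} (p : Q.Path i j) (q : Q.Path j l) (r : Q.Path l m),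
    (p.comp q).comp r = p.comp (q.comp r)
  | _, _, _, _, QD.Path.nil _, _, _ => rfl
  | _, _, _, _, QD.Path.cons a p, q, r => by
      simp only [QD.Path.comp, comp_assoc p q r]

lemma length_comp : ∀ {i j l : Q.V} (p : Q.Path i j) (q : Q.Path j l),
    (p.comp q).length = p.length + q.length := by
  intro i j l p q
  rw [← length_arrowsOf, ← length_arrowsOf p, ← length_arrowsOf q, arrowsOf_comp,
    List.length_append]

lemma exists_split : ∀ {i j : Q.V} (u : ℕ) (p : Q.Path i j), u ≤ p.length →
    ∃ (v : Q.V) (p1 : Q.Path i v) (p2 : Q.Path v j), p = p1.comp p2 ∧ p1.length = u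
  | i, _, 0, p, _ => ⟨i, QD.Path.nil i, p, rfl, rfl⟩
  | _, _, u + 1, QD.Path.nil _, hle => by simp [QD.Path.length] at hle
  | i, j, u + 1, QD.Path.cons a p, hle => by
      obtain ⟨v, p1, p2, hsplit, hlen⟩ :=
        exists_split u p (by simpa [QD.Path.length] using hle)
      exact ⟨v, QD.Path.cons a p1, p2, by simp only [QD.Path.comp, hsplit],
        by simp [QD.Path.length, hlen]⟩

variable (K : Type) [Field K] [Fintype Q.V] (n : ℕ) (PA : PathAlg K Q)

lemma cls_congr {i j i' j' : Q.V} {p : Q.Path i j} {q : Q.Path i' j'}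
    (h : p.sig = q.sig) : cls K Q n PA p = cls K Q n PA q :=
  congrArg (fun z : QD.PathIn Q => cls K Q n PA z.2.2) h

variable (basA : Module.Basis (Short Q n) K (TA K Q n PA))

lemma cls_ne_zero (hbas : ∀ sp : Short Q n, basA sp = cls K Q n PA sp.1.2.2)
    {i j : Q.V} (p : Q.Path i j) (hl : p.length < n) : cls K Q n PA p ≠ 0 := by
  have h2 := basA.ne_zero (⟨p.sig, hl⟩ : Short Q n)
  rw [hbas] at h2
  exact h2

lemma coordP_nil_ne_zero (hn : 0 < n) (i : Q.V) :
    coordP K Q n PA basA (QD.Path.nil i).sig ≠ 0 := by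
  have hlt : (QD.Path.nil (Q := Q) i).sig.2.2.length < n := hn
  rw [coordP, dif_pos hlt]
  intro h0
  have h1 : basA.coord ⟨(QD.Path.nil (Q := Q) i).sig, hlt⟩
      (basA ⟨(QD.Path.nil (Q := Q) i).sig, hlt⟩) = 1 := by
    simp [Module.Basis.coord_apply, Module.Basis.repr_self]
  rw [h0] at h1
  simp at h1

variable (s : ℕ) [NeZero s] (w : ZMod s → Q.V) (x : ∀ i : ZMod s, Q.Ar (w i) (w (i + 1)))

/-- The arrow `x_j` of the basic cycle, bundled with its endpoints. -/
def arrSig (j : ZMod s) : Σ u : Q.V, Σ v : Q.V, Q.Ar u v := ⟨w j, w (j + 1), x j⟩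

lemma arrowsOf_cast {u : Q.V} {v v' : ZMod s} (hvv : v = v') (p : Q.Path u (w v)) :
    arrowsOf (cast (congrArg (fun z : ZMod s => Q.Path u (w z)) hvv) p) = arrowsOf p := by
  subst hvv; rfl

lemma sig_cast {u v v' : Q.V} (hvv : v = v') (p : Q.Path u v) :
    (cast (congrArg (fun z : Q.V => Q.Path u z) hvv) p).sig = p.sig := by
  subst hvv; rfl

lemma arrowsOf_seg : ∀ (m : ℕ) (i : ZMod s),
    arrowsOf (seg Q s w x i m) = (List.range m).map (fun t : ℕ => arrSig s w x (i + (t : ZMod s)))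
  | 0, i => by
      rw [seg, arrowsOf_cast]
      · rfl
      · push_cast; ring
  | m + 1, i => by
      rw [seg, arrowsOf_cast]
      · show arrSig s w x i :: arrowsOf (seg Q s w x (i + 1) m) = _
        rw [arrowsOf_seg m (i + 1), List.range_succ_eq_map, List.map_cons, List.map_map]
        congr 1
        · exact congrArg (arrSig s w x) (by push_cast; ring)
        · apply List.map_congr_left
          intro t _
          simp only [Function.comp_apply]
          exact congrArg (arrSig s w x) (by push_cast; ring)
      · push_cast; ring

lemma seg_length (i : ZMod s) (m : ℕ) : (seg Q s w x i m).length = m := by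
  rw [← length_arrowsOf, arrowsOf_seg, List.length_map, List.length_range]

lemma rot_fwd {h h₂ : Q.V} (a : Q.Ar h h₂) (p : Q.Path h₂ h) (r : ZMod s)
    (hr : (QD.Path.cons a p).sig = (seg Q s w x r s).sig) :
    (p.comp (QD.Path.cons a (QD.Path.nil h₂))).sig = (seg Q s w x (r + 1) s).sig := by
  have hz : ((s - 1 : ℕ) : ZMod s) + 1 = 0 := by
    have h1 : (((s - 1) + 1 : ℕ) : ZMod s) = 0 := by
      rw [show s - 1 + 1 = s from by have := Nat.pos_of_ne_zero (NeZero.ne s); omega,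
        ZMod.natCast_self]
    push_cast at h1
    exact h1
  have hrange : List.range s = List.range (s - 1) ++ [s - 1] := by
    rw [← List.range_succ]
    congr 1
    have := Nat.pos_of_ne_zero (NeZero.ne s); omega
  have hrange2 : List.range s = 0 :: List.map Nat.succ (List.range (s - 1)) := by
    conv_lhs => rw [show s = (s - 1) + 1 from by
      have := Nat.pos_of_ne_zero (NeZero.ne s); omega]
    rw [List.range_succ_eq_map]
  obtain ⟨e1, -, hl⟩ := (sig_eq_iff _ _).mp hr
  rw [arrowsOf_seg, hrange2, List.map_cons, List.map_map] at hl
  simp only [arrowsOf] at hl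
  obtain ⟨hA, hT⟩ := List.cons_eq_cons.mp hl
  rw [show r + ((0 : ℕ) : ZMod s) = r from by push_cast; ring] at hA
  have hstart : h₂ = w (r + 1) :=
    congrArg (fun z : (Σ u : Q.V, Σ v : Q.V, Q.Ar u v) => z.2.1) hA
  refine (sig_eq_iff _ _).mpr ⟨hstart, ?_, ?_⟩
  · rw [show r + 1 + ((s : ℕ) : ZMod s) = r + 1 from by rw [ZMod.natCast_self, add_zero]]
    exact hstart
  · rw [arrowsOf_comp, arrowsOf_seg, hrange, List.map_append, hT]
    simp only [arrowsOf, List.map_cons, List.map_nil]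
    congr 1
    · apply List.map_congr_left
      intro t _
      simp only [Function.comp_apply]
      exact congrArg (arrSig s w x) (by push_cast; ring)
    · rw [show r + 1 + ((s - 1 : ℕ) : ZMod s) = r from by linear_combination hz, ← hA]

lemma rot_bwd {h h₂ : Q.V} (a : Q.Ar h h₂) (p : Q.Path h₂ h) (r : ZMod s)
    (hplen : p.length = s - 1)
    (hr : (p.comp (QD.Path.cons a (QD.Path.nil h₂))).sig = (seg Q s w x r s).sig) :
    (QD.Path.cons a p).sig = (seg Q s w x (r + ((s - 1 : ℕ) : ZMod s)) s).sig := by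
  have hz : ((s - 1 : ℕ) : ZMod s) + 1 = 0 := by
    have h1 : (((s - 1) + 1 : ℕ) : ZMod s) = 0 := by
      rw [show s - 1 + 1 = s from by have := Nat.pos_of_ne_zero (NeZero.ne s); omega,
        ZMod.natCast_self]
    push_cast at h1
    exact h1
  have hrange : List.range s = List.range (s - 1) ++ [s - 1] := by
    rw [← List.range_succ]
    congr 1
    have := Nat.pos_of_ne_zero (NeZero.ne s); omega
  have hrange2 : List.range s = 0 :: List.map Nat.succ (List.range (s - 1)) := by
    conv_lhs => rw [show s = (s - 1) + 1 from by
      have := Nat.pos_of_ne_zero (NeZero.ne s); omega]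
    rw [List.range_succ_eq_map]
  obtain ⟨-, -, hl⟩ := (sig_eq_iff _ _).mp hr
  rw [arrowsOf_comp, arrowsOf_seg, hrange, List.map_append] at hl
  simp only [arrowsOf, List.map_cons, List.map_nil] at hl
  obtain ⟨hT, hA⟩ := List.append_inj hl
    (by rw [length_arrowsOf, hplen, List.length_map, List.length_range])
  obtain ⟨hA, -⟩ := List.cons_eq_cons.mp hA
  refine (sig_eq_iff _ _).mpr
    ⟨congrArg (fun z : (Σ u : Q.V, Σ v : Q.V, Q.Ar u v) => z.1) hA, ?_, ?_⟩
  · rw [show r + ((s - 1 : ℕ) : ZMod s) + ((s : ℕ) : ZMod s) = r + ((s - 1 : ℕ) : ZMod s) from by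
      rw [ZMod.natCast_self, add_zero]]
    exact congrArg (fun z : (Σ u : Q.V, Σ v : Q.V, Q.Ar u v) => z.1) hA
  · simp only [arrowsOf]
    rw [arrowsOf_seg, hrange2, List.map_cons, List.map_map]
    congr 1
    · rw [show r + ((s - 1 : ℕ) : ZMod s) + ((0 : ℕ) : ZMod s) = r + ((s - 1 : ℕ) : ZMod s)
        from by push_cast; ring, ← hA]
    · rw [hT]
      apply List.map_congr_left
      intro t _
      simp only [Function.comp_apply]
      refine congrArg (arrSig s w x) ?_
      have hc : ((t + 1 : ℕ) : ZMod s) = (t : ZMod s) + 1 := by push_cast; ring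
      rw [hc]
      linear_combination -hz

end AuxRot
section Statements

variable (K : Type) [Field K] (Q : QD) [Fintype Q.V] [∀ i j : Q.V, Fintype (Q.Ar i j)]
variable (n : ℕ) (PA : PathAlg K Q)
variable (basA : Module.Basis (Short Q n) K (TA K Q n PA))
variable (s : ℕ) [NeZero s] (w : ZMod s → Q.V) (x : ∀ i : ZMod s, Q.Ar (w i) (w (i + 1)))
variable (k : K)
variable (αm : TA K Q n PA →ₗ[K] TA K Q n PA →ₗ[K] Module.Dual K (TA K Q n PA))
variable (t : ℕ) (pM : Fin t → QD.PathIn Q)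
variable (T : Type) [Ring T] [Algebra K T]
variable (eT : T ≃ₗ[K] TA K Q n PA × Module.Dual K (TA K Q n PA))
variable (PB : PathAlg K (Qe Q t pM))
variable (Φm : PB.P →ₐ[K] T)

/-- the cyclic rotation of an `α`-revived cycle is `α`-revived. -/
theorem stmt3
    [IsAlgClosed K]
    (hn : 2 ≤ n)
    (hdim : 1 < Module.finrank K (TA K Q n PA))
    (hconn : ∀ i j : Q.V,
      Relation.EqvGen (fun u v : Q.V => Nonempty (Q.Ar u v) ∨ Nonempty (Q.Ar v u)) i j)
    (hcyc : ∀ (i : Q.V) (p : Q.Path i i), 0 < p.length → cls K Q n PA p = 0)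
    (hbas : ∀ sp : Short Q n, basA sp = cls K Q n PA sp.1.2.2)
    (hs1 : n + 1 ≤ s) (hs2 : s ≤ 2 * n - 2)
    (hk : k ≠ 0)
    (hα : ∀ {i j l : Q.V} (a : Q.Path i j) (b : Q.Path j l),
      αm (cls K Q n PA a) (cls K Q n PA b) =
        k • ∑ r : ZMod s, aTerm K Q n PA basA s w x a b r)
    (hcoc : ∀ a b c : TA K Q n PA,
      dL K Q n PA a (αm b c) + αm a (b * c) = αm (a * b) c + dR K Q n PA (αm a b) c)
    (hMlt : ∀ m : Fin t, (pM m).2.2.length < n)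
    (hMli : LinearIndependent K fun m : Fin t => cls K Q n PA (pM m).2.2)
    (hMsp : Submodule.span K (Set.range fun m : Fin t => cls K Q n PA (pM m).2.2)
      = socA K Q n PA)
    (hTmul : ∀ u v : T, eT (u * v) = ((eT u).1 * (eT v).1,
      dL K Q n PA (eT u).1 (eT v).2 + dR K Q n PA (eT u).2 (eT v).1 + αm (eT u).1 (eT v).1))
    (hTone : eT 1 = (1, 0))
    (hΦnil : ∀ i : Q.V, Φm (PB.ι (QD.Path.nil (Q := Qe Q t pM) i))
      = eT.symm (cls K Q n PA (QD.Path.nil i), 0))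
    (hΦarr : ∀ {i j : Q.V} (a : Q.Ar i j),
      Φm (PB.ι (QD.Path.cons (Sum.inl a) (QD.Path.nil (Q := Qe Q t pM) j)))
      = eT.symm (cls K Q n PA (QD.Path.cons a (QD.Path.nil j)), 0))
    (hΦy : ∀ m : Fin t,
      Φm (PB.ι (QD.Path.cons (yArr Q t pM m) (QD.Path.nil (Q := Qe Q t pM) (pM m).1)))
      = eT.symm (0, coordP K Q n PA basA (pM m)))
    (hΦsurj : Function.Surjective Φm)
    {h h₂ : Q.V} (a : Q.Ar h h₂) (p : Q.Path h₂ h)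
    (hC : IsRev K Q n PA αm (QD.Path.cons a p)) :
    IsRev K Q n PA αm (p.comp (QD.Path.cons a (QD.Path.nil h₂))) := by
  obtain ⟨jv, u, b, hu_pos, hb_pos, hu0, hb0, hCeq, hαab⟩ := hC
  have hcomp : u.comp b = QD.Path.cons a p := hCeq.symm
  rw [hα u b] at hαab
  have hsum : (∑ r : ZMod s, aTerm K Q n PA basA s w x u b r) ≠ 0 := by
    intro h0; rw [h0, smul_zero] at hαab; exact hαab rfl
  obtain ⟨r₀, -, hr₀⟩ := Finset.exists_ne_zero_of_sum_ne_zero hsum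
  -- the cycle has length exactly s
  have hmC : (QD.Path.cons a p).length = s := by
    simp only [aTerm] at hr₀
    rw [hcomp] at hr₀
    split_ifs at hr₀ with hc1 hc2
    · exfalso
      obtain ⟨-, -, hnle, hlts, hsig⟩ := hc1
      set m' := (QD.Path.cons a p).length with hm'
      obtain ⟨e1, e2, -⟩ := (sig_eq_iff _ _).mp hsig
      have hidx : ((m' : ℕ) : ZMod s) + ((s - m' : ℕ) : ZMod s) = 0 := by
        rw [← Nat.cast_add, show m' + (s - m') = s from by omega, ZMod.natCast_self]
      have he : w (r₀ + (m' : ZMod s)) = w (r₀ + (m' : ZMod s) + ((s - m' : ℕ) : ZMod s)) := by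
        rw [show r₀ + (m' : ZMod s) + ((s - m' : ℕ) : ZMod s) = r₀ from by
          linear_combination hidx, ← e2, ← e1]
      have hcst := sig_cast (Q := Q) he.symm (seg Q s w x (r₀ + (m' : ZMod s)) (s - m'))
      have hzero := hcyc (w (r₀ + (m' : ZMod s)))
        (cast (congrArg (fun z : Q.V => Q.Path (w (r₀ + (m' : ZMod s))) z) he.symm)
          (seg Q s w x (r₀ + (m' : ZMod s)) (s - m')))
        (by rw [length_congr_sig hcst, seg_length]; omega)
      exact cls_ne_zero K n PA basA hbas _
        (by rw [length_congr_sig hcst, seg_length]; omega) hzero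
    · exact hc2.2.2.1
    · exact absurd rfl hr₀
  have hplen : p.length = s - 1 := by
    simp only [QD.Path.length] at hmC; omega
  have hz : ((s - 1 : ℕ) : ZMod s) + 1 = 0 := by
    have h1 : (((s - 1) + 1 : ℕ) : ZMod s) = 0 := by
      rw [show s - 1 + 1 = s from by omega, ZMod.natCast_self]
    push_cast at h1
    exact h1
  -- evaluate the original sum
  have key : ∀ r : ZMod s, aTerm K Q n PA basA s w x u b r =
      if (QD.Path.cons a p).sig = (seg Q s w x r s).sig then
        coordP K Q n PA basA (QD.Path.nil h).sig else 0 := by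
    intro r
    simp only [aTerm]
    rw [hcomp]
    rw [if_neg (by rintro ⟨-, -, -, hlt, -⟩; rw [hmC] at hlt; exact lt_irrefl s hlt)]
    by_cases hr : (QD.Path.cons a p).sig = (seg Q s w x r s).sig
    · rw [if_pos ⟨hu0, hb0, hmC, hr⟩, if_pos hr]
      obtain ⟨e1, -, -⟩ := (sig_eq_iff _ _).mp hr
      exact (congrArg (fun v : Q.V =>
        coordP K Q n PA basA (QD.Path.nil (Q := Q) v).sig) e1).symm
    · rw [if_neg (by rintro ⟨-, -, -, hr'⟩; exact hr hr'), if_neg hr]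
  have hsum1 : (∑ r : ZMod s, aTerm K Q n PA basA s w x u b r)
      = (Finset.univ.filter (fun r : ZMod s =>
          (QD.Path.cons a p).sig = (seg Q s w x r s).sig)).card
        • coordP K Q n PA basA (QD.Path.nil h).sig := by
    rw [Finset.sum_congr rfl (fun r _ => key r), ← Finset.sum_filter, Finset.sum_const]
  rw [hsum1] at hαab
  have hkc : (k * (((Finset.univ.filter (fun r : ZMod s =>
      (QD.Path.cons a p).sig = (seg Q s w x r s).sig)).card : ℕ) : K)) ≠ 0 := by
    intro h0
    apply hαab
    rw [← Nat.cast_smul_eq_nsmul K, smul_smul, h0, zero_smul]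
  -- the two index sets have the same cardinality
  have hcard : (Finset.univ.filter (fun r : ZMod s =>
        (QD.Path.cons a p).sig = (seg Q s w x r s).sig)).card
      = (Finset.univ.filter (fun r : ZMod s =>
        (p.comp (QD.Path.cons a (QD.Path.nil h₂))).sig = (seg Q s w x r s).sig)).card := by
    refine Finset.card_bij' (fun r _ => r + 1) (fun r _ => r + ((s - 1 : ℕ) : ZMod s))
      ?_ ?_ ?_ ?_
    · intro r hr
      simp only [Finset.mem_filter, Finset.mem_univ, true_and] at hr ⊢
      exact rot_fwd s w x a p r hr
    · intro r hr
      simp only [Finset.mem_filter, Finset.mem_univ, true_and] at hr ⊢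
      exact rot_bwd s w x a p r hplen hr
    · intro r _; linear_combination hz
    · intro r _; linear_combination hz
  -- construct the splitting of the rotated cycle
  have hone : (QD.Path.cons a (QD.Path.nil h₂)).length = 1 := rfl
  obtain ⟨v, p1, p2, hps, hp1len⟩ := exists_split (s - (n - 1)) p (by omega)
  have hl2 : p.length = p1.length + p2.length := by rw [hps, length_comp]
  have hclsa : cls K Q n PA p1 ≠ 0 :=
    cls_ne_zero K n PA basA hbas p1 (by omega)
  have hclsb : cls K Q n PA (p2.comp (QD.Path.cons a (QD.Path.nil h₂))) ≠ 0 :=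
    cls_ne_zero K n PA basA hbas _ (by rw [length_comp, hone]; omega)
  have hC'eq : p.comp (QD.Path.cons a (QD.Path.nil h₂))
      = p1.comp (p2.comp (QD.Path.cons a (QD.Path.nil h₂))) := by
    rw [hps, comp_assoc]
  refine ⟨v, p1, p2.comp (QD.Path.cons a (QD.Path.nil h₂)), by omega,
    by rw [length_comp, hone]; omega, hclsa, hclsb, hC'eq, ?_⟩
  rw [hα p1 (p2.comp (QD.Path.cons a (QD.Path.nil h₂)))]
  have hD : p1.comp (p2.comp (QD.Path.cons a (QD.Path.nil h₂)))
      = p.comp (QD.Path.cons a (QD.Path.nil h₂)) := hC'eq.symm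
  have hDlen : (p.comp (QD.Path.cons a (QD.Path.nil h₂))).length = s := by
    rw [length_comp, hone]; omega
  have key2 : ∀ r : ZMod s,
      aTerm K Q n PA basA s w x p1 (p2.comp (QD.Path.cons a (QD.Path.nil h₂))) r =
      if (p.comp (QD.Path.cons a (QD.Path.nil h₂))).sig = (seg Q s w x r s).sig then
        coordP K Q n PA basA (QD.Path.nil h₂).sig else 0 := by
    intro r
    simp only [aTerm]
    rw [hD]
    rw [if_neg (by rintro ⟨-, -, -, hlt, -⟩; rw [hDlen] at hlt; exact lt_irrefl s hlt)]
    by_cases hr : (p.comp (QD.Path.cons a (QD.Path.nil h₂))).sig = (seg Q s w x r s).sig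
    · rw [if_pos ⟨hclsa, hclsb, hDlen, hr⟩, if_pos hr]
      obtain ⟨e1, -, -⟩ := (sig_eq_iff _ _).mp hr
      exact (congrArg (fun v' : Q.V =>
        coordP K Q n PA basA (QD.Path.nil (Q := Q) v').sig) e1).symm
    · rw [if_neg (by rintro ⟨-, -, -, hr'⟩; exact hr hr'), if_neg hr]
  have hsum2 : (∑ r : ZMod s,
      aTerm K Q n PA basA s w x p1 (p2.comp (QD.Path.cons a (QD.Path.nil h₂))) r)
      = (Finset.univ.filter (fun r : ZMod s =>
          (p.comp (QD.Path.cons a (QD.Path.nil h₂))).sig = (seg Q s w x r s).sig)).card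
        • coordP K Q n PA basA (QD.Path.nil h₂).sig := by
    rw [Finset.sum_congr rfl (fun r _ => key2 r), ← Finset.sum_filter, Finset.sum_const]
  rw [hsum2, ← hcard, ← Nat.cast_smul_eq_nsmul K, smul_smul]
  exact smul_ne_zero hkc (coordP_nil_ne_zero K n PA basA (by omega) h₂)

end Statements
end
end

section
/- If v = v_1 + v_2 where v_1 is a path in KΔ and v_2 is a path in Y, then Φ(v) = (φ_1(v_1), φ_2(v_2)) if length(v_1) < n; Φ(v) = (0, φ_2(v_1 + v_2)) if n ≤ length(v_1) ≤ s; and Φ(v) = (0, φ_2(v_2)) if s < length(v_1). -/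
noncomputable section
open Classical

section Statements

variable (K : Type) [Field K] (Q : QD) [Fintype Q.V] [∀ i j : Q.V, Fintype (Q.Ar i j)]
variable (n : ℕ) (PA : PathAlg K Q)
variable (basA : Module.Basis (Short Q n) K (TA K Q n PA))
variable (s : ℕ) [NeZero s] (w : ZMod s → Q.V) (x : ∀ i : ZMod s, Q.Ar (w i) (w (i + 1)))
variable (k : K)
variable (αm : TA K Q n PA →ₗ[K] TA K Q n PA →ₗ[K] Module.Dual K (TA K Q n PA))
variable (t : ℕ) (pM : Fin t → QD.PathIn Q)
variable (T : Type) [Ring T] [Algebra K T]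
variable (eT : T ≃ₗ[K] TA K Q n PA × Module.Dual K (TA K Q n PA))
variable (PB : PathAlg K (Qe Q t pM))
variable (Φm : PB.P →ₐ[K] T)

/-- for `v = v₁ + v₂` with `v₁` a path of `KΔ` and `v₂` a path lying in `Y`,
`Φ(v)` is `(φ₁(v₁), φ₂(v₂))`, `(0, φ₂(v₁ + v₂))` or `(0, φ₂(v₂))` according to whether
`length v₁ < n`, `n ≤ length v₁ ≤ s` or `s < length v₁`. -/
theorem stmt5
    [IsAlgClosed K]
    (hn : 2 ≤ n)
    (hdim : 1 < Module.finrank K (TA K Q n PA))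
    (hconn : ∀ i j : Q.V,
      Relation.EqvGen (fun u v : Q.V => Nonempty (Q.Ar u v) ∨ Nonempty (Q.Ar v u)) i j)
    (hcyc : ∀ (i : Q.V) (p : Q.Path i i), 0 < p.length → cls K Q n PA p = 0)
    (hbas : ∀ sp : Short Q n, basA sp = cls K Q n PA sp.1.2.2)
    (hs1 : n + 1 ≤ s) (hs2 : s ≤ 2 * n - 2)
    (hk : k ≠ 0)
    (hα : ∀ {i j l : Q.V} (a : Q.Path i j) (b : Q.Path j l),
      αm (cls K Q n PA a) (cls K Q n PA b) =
        k • ∑ r : ZMod s, aTerm K Q n PA basA s w x a b r)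
    (hcoc : ∀ a b c : TA K Q n PA,
      dL K Q n PA a (αm b c) + αm a (b * c) = αm (a * b) c + dR K Q n PA (αm a b) c)
    (hMlt : ∀ m : Fin t, (pM m).2.2.length < n)
    (hMli : LinearIndependent K fun m : Fin t => cls K Q n PA (pM m).2.2)
    (hMsp : Submodule.span K (Set.range fun m : Fin t => cls K Q n PA (pM m).2.2)
      = socA K Q n PA)
    (hTmul : ∀ u v : T, eT (u * v) = ((eT u).1 * (eT v).1,
      dL K Q n PA (eT u).1 (eT v).2 + dR K Q n PA (eT u).2 (eT v).1 + αm (eT u).1 (eT v).1))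
    (hTone : eT 1 = (1, 0))
    (hΦnil : ∀ i : Q.V, Φm (PB.ι (QD.Path.nil (Q := Qe Q t pM) i))
      = eT.symm (cls K Q n PA (QD.Path.nil i), 0))
    (hΦarr : ∀ {i j : Q.V} (a : Q.Ar i j),
      Φm (PB.ι (QD.Path.cons (Sum.inl a) (QD.Path.nil (Q := Qe Q t pM) j)))
      = eT.symm (cls K Q n PA (QD.Path.cons a (QD.Path.nil j)), 0))
    (hΦy : ∀ m : Fin t,
      Φm (PB.ι (QD.Path.cons (yArr Q t pM m) (QD.Path.nil (Q := Qe Q t pM) (pM m).1)))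
      = eT.symm (0, coordP K Q n PA basA (pM m)))
    (hΦsurj : Function.Surjective Φm)
    {i j i' j' : Q.V} (v₁ : Q.Path i j) (v₂ : (Qe Q t pM).Path i' j')
    (hv₂ : 1 ≤ numY Q t pM v₂) :
    (v₁.length < n →
      eT (Φm (PB.ι (embed Q t pM v₁) + PB.ι v₂))
        = (ph1 K Q n PA t pM T eT PB Φm (PB.ι (embed Q t pM v₁)),
           ph2 K Q n PA t pM T eT PB Φm (PB.ι v₂))) ∧
    (n ≤ v₁.length → v₁.length ≤ s →
      eT (Φm (PB.ι (embed Q t pM v₁) + PB.ι v₂))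
        = (0, ph2 K Q n PA t pM T eT PB Φm (PB.ι (embed Q t pM v₁) + PB.ι v₂))) ∧
    (s < v₁.length →
      eT (Φm (PB.ι (embed Q t pM v₁) + PB.ι v₂))
        = (0, ph2 K Q n PA t pM T eT PB Φm (PB.ι v₂))) := by
  classical
  -- length of a composite
  have comp_len : ∀ {i₀ j₀ l₀ : Q.V} (p : Q.Path i₀ j₀) (q : Q.Path j₀ l₀),
      (p.comp q).length = p.length + q.length := by
    intro i₀ j₀ l₀ p q
    induction p with
    | nil _ => simp [QD.Path.comp, QD.Path.length]
    | cons a p ih => simp only [QD.Path.comp, QD.Path.length, ih]; omega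
  -- classes of long paths vanish
  have cls_long : ∀ {i₀ j₀ : Q.V} (p : Q.Path i₀ j₀), n ≤ p.length → cls K Q n PA p = 0 := by
    intro i₀ j₀ p hp
    have hrel : truncRel K Q n PA (PA.ι p) 0 := ⟨rfl, ⟨⟨i₀, j₀, p⟩, hp, rfl⟩⟩
    have h0 := RingQuot.mkAlgHom_rel K hrel
    rw [cls, h0, map_zero]
  have cls_comp : ∀ {i₀ j₀ l₀ : Q.V} (p : Q.Path i₀ j₀) (q : Q.Path j₀ l₀),
      cls K Q n PA (p.comp q) = cls K Q n PA p * cls K Q n PA q := by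
    intro i₀ j₀ l₀ p q
    rw [cls, cls, cls, PA.ι_comp, map_mul]
  have cls_ortho : ∀ {i₀ j₀ u v : Q.V} (p : Q.Path i₀ j₀) (q : Q.Path u v), j₀ ≠ u →
      cls K Q n PA p * cls K Q n PA q = 0 := by
    intro i₀ j₀ u v p q h
    rw [cls, cls, ← map_mul, PA.ι_ortho p q h, map_zero]
  -- dL / dR basics
  have dL_zero : ∀ a : TA K Q n PA, dL K Q n PA a 0 = 0 := fun a => LinearMap.zero_comp _
  have dR_zero : ∀ b : TA K Q n PA, dR K Q n PA 0 b = 0 := fun b => LinearMap.zero_comp _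
  have dL_dL : ∀ (a b : TA K Q n PA) (f : Module.Dual K (TA K Q n PA)),
      dL K Q n PA a (dL K Q n PA b f) = dL K Q n PA (a * b) f := by
    intro a b f
    refine LinearMap.ext fun z => ?_
    simp [dL, mul_assoc]
  -- length of segments of the cycle
  have len_cast : ∀ {i₀ : Q.V} {v v' : ZMod s} (h : v = v') (p : Q.Path i₀ (w v)),
      (cast (congrArg (fun u : ZMod s => Q.Path i₀ (w u)) h) p).length = p.length := by
    intro i₀ v v' h p; subst h; rfl
  have seg_len : ∀ (m : ℕ) (r : ZMod s), (seg Q s w x r m).length = m := by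
    intro m
    induction m with
    | zero =>
      intro r
      rw [seg, len_cast]
      · rfl
      · push_cast; ring
    | succ m ih =>
      intro r
      rw [seg, len_cast]
      · simp only [QD.Path.length, ih]
      · push_cast; ring
  -- key vanishing of coordinate functionals
  have E : ∀ (σ : QD.PathIn Q) {u v : Q.V} (P : Q.Path u v), σ.2.2.length < P.length →
      dL K Q n PA (cls K Q n PA P) (coordP K Q n PA basA σ) = 0 := by
    intro σ u v P hlt
    rw [coordP]
    split_ifs with hσ
    · refine basA.ext fun sp => ?_
      rw [hbas sp]
      simp only [dL, LinearMap.comp_apply, LinearMap.mulRight_apply, LinearMap.zero_apply]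
      obtain ⟨⟨i₀, j₀, p⟩, hsp⟩ := sp
      by_cases hend : j₀ = u
      · subst hend
        rw [← cls_comp]
        by_cases hlen2 : (p.comp P).length < n
        · rw [show cls K Q n PA (p.comp P) = basA ⟨⟨i₀, v, p.comp P⟩, hlen2⟩ from
            (hbas ⟨⟨i₀, v, p.comp P⟩, hlen2⟩).symm]
          rw [Module.Basis.coord_apply, Module.Basis.repr_self]
          refine Finsupp.single_eq_of_ne ?_
          intro hEq
          have hl := congrArg (fun z : Short Q n => z.1.2.2.length) hEq
          have hcl := comp_len p P
          simp only at hl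
          omega
        · rw [cls_long _ (le_of_not_gt hlen2), map_zero]
      · rw [cls_ortho p P hend, map_zero]
    · rw [dL_zero]
  -- first component of the image of an embedded path
  have fst_embed : ∀ {i₀ j₀ : Q.V} (p : Q.Path i₀ j₀),
      (eT (Φm (PB.ι (embed Q t pM p)))).1 = cls K Q n PA p := by
    intro i₀ j₀ p
    induction p with
    | nil i₀ =>
      rw [show embed Q t pM (QD.Path.nil i₀) = QD.Path.nil (Q := Qe Q t pM) i₀ from rfl,
        hΦnil, LinearEquiv.apply_symm_apply]
    | cons a p ih =>
      have h1 : PB.ι (embed Q t pM (QD.Path.cons a p))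
          = PB.ι (QD.Path.cons (Sum.inl a) (QD.Path.nil (Q := Qe Q t pM) _))
            * PB.ι (embed Q t pM p) :=
        PB.ι_comp (QD.Path.cons (Sum.inl a) (QD.Path.nil _)) (embed Q t pM p)
      rw [h1, map_mul, hTmul, hΦarr, LinearEquiv.apply_symm_apply]
      dsimp only
      rw [ih, ← cls_comp]
      rfl
  -- second component of a short embedded path is zero
  have snd_short : ∀ {i₀ j₀ : Q.V} (p : Q.Path i₀ j₀), p.length < n →
      (eT (Φm (PB.ι (embed Q t pM p)))).2 = 0 := by
    intro i₀ j₀ p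
    induction p with
    | nil i₀ =>
      intro _
      rw [show embed Q t pM (QD.Path.nil i₀) = QD.Path.nil (Q := Qe Q t pM) i₀ from rfl,
        hΦnil, LinearEquiv.apply_symm_apply]
    | cons a p ih =>
      intro hlen
      have hlen' : (QD.Path.cons a p).length = p.length + 1 := rfl
      have hpl : p.length < n := by omega
      have h1 : PB.ι (embed Q t pM (QD.Path.cons a p))
          = PB.ι (QD.Path.cons (Sum.inl a) (QD.Path.nil (Q := Qe Q t pM) _))
            * PB.ι (embed Q t pM p) :=
        PB.ι_comp (QD.Path.cons (Sum.inl a) (QD.Path.nil _)) (embed Q t pM p)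
      rw [h1, map_mul, hTmul, hΦarr, LinearEquiv.apply_symm_apply]
      dsimp only
      rw [ih hpl, fst_embed, dL_zero, dR_zero, zero_add, zero_add]
      rw [hα (QD.Path.cons a (QD.Path.nil _)) p]
      have hterm : ∀ r : ZMod s,
          aTerm K Q n PA basA s w x (QD.Path.cons a (QD.Path.nil _)) p r = 0 := by
        intro r
        have hlc : ((QD.Path.cons a (QD.Path.nil _)).comp p).length = p.length + 1 := by
          rw [comp_len]; show 1 + p.length = p.length + 1; omega
        rw [aTerm, if_neg, if_neg]
        · rintro ⟨-, -, h3, -⟩; omega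
        · rintro ⟨-, -, h3, -, -⟩; omega
      simp only [hterm, Finset.sum_const_zero, smul_zero]
  -- main vanishing lemma
  have G : ∀ {i₀ j₀ : Q.V} (q : Q.Path i₀ j₀), n ≤ q.length →
      ∀ {u : Q.V} (P : Q.Path u i₀), s < P.length + q.length →
      dL K Q n PA (cls K Q n PA P) (eT (Φm (PB.ι (embed Q t pM q)))).2 = 0 := by
    intro i₀ j₀ q
    induction q with
    | nil _ => intro h; exact absurd h (by simp [QD.Path.length]; omega)
    | cons a q ih =>
      intro hq u P hP
      have hlen' : (QD.Path.cons a q).length = q.length + 1 := rfl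
      have h1 : PB.ι (embed Q t pM (QD.Path.cons a q))
          = PB.ι (QD.Path.cons (Sum.inl a) (QD.Path.nil (Q := Qe Q t pM) _))
            * PB.ι (embed Q t pM q) :=
        PB.ι_comp (QD.Path.cons (Sum.inl a) (QD.Path.nil _)) (embed Q t pM q)
      rw [h1, map_mul, hTmul, hΦarr, LinearEquiv.apply_symm_apply]
      dsimp only
      rw [fst_embed]
      by_cases hql : n ≤ q.length
      · rw [cls_long q hql, (αm _).map_zero, dR_zero, add_zero, add_zero, dL_dL, ← cls_comp]
        refine ih hql (P.comp (QD.Path.cons a (QD.Path.nil _))) ?_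
        rw [comp_len]
        have : (QD.Path.cons a (QD.Path.nil _)).length = 1 := rfl
        omega
      · push_neg at hql
        rw [snd_short q hql, dL_zero, dR_zero, zero_add, zero_add]
        rw [hα (QD.Path.cons a (QD.Path.nil _)) q]
        have hlc : ((QD.Path.cons a (QD.Path.nil _)).comp q).length = q.length + 1 := by
          rw [comp_len]; show 1 + q.length = q.length + 1; omega
        have hterm : ∀ r : ZMod s, dL K Q n PA (cls K Q n PA P)
            (aTerm K Q n PA basA s w x (QD.Path.cons a (QD.Path.nil _)) q r) = 0 := by
          intro r
          rw [aTerm]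
          split_ifs with hc1 hc2
          · refine E _ P ?_
            show (seg Q s w x _ (s - ((QD.Path.cons a (QD.Path.nil _)).comp q).length)).length
              < P.length
            rw [seg_len, hlc]
            omega
          · exfalso
            obtain ⟨-, -, h3, -⟩ := hc2
            omega
          · exact dL_zero _
        refine LinearMap.ext fun z => ?_
        have hz : ∀ r : ZMod s,
            (aTerm K Q n PA basA s w x (QD.Path.cons a (QD.Path.nil _)) q r)
              (z * cls K Q n PA P) = 0 := fun r => LinearMap.congr_fun (hterm r) z
        simp only [dL, LinearMap.comp_apply, LinearMap.mulRight_apply, LinearMap.smul_apply,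
          LinearMap.coe_sum, Finset.sum_apply, hz, Finset.sum_const_zero, smul_zero,
          LinearMap.zero_apply]
  -- second component of a long embedded path is zero
  have snd_long : ∀ {i₀ j₀ : Q.V} (q : Q.Path i₀ j₀), s < q.length →
      (eT (Φm (PB.ι (embed Q t pM q)))).2 = 0 := by
    intro i₀ j₀ q hq
    have hqn : n ≤ q.length := by omega
    have h1 : PB.ι (embed Q t pM q)
        = PB.ι (QD.Path.nil (Q := Qe Q t pM) i₀) * PB.ι (embed Q t pM q) :=
      PB.ι_comp (QD.Path.nil (Q := Qe Q t pM) i₀) (embed Q t pM q)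
    have h3 := congrArg (fun z : T => (eT z).2) (congrArg Φm h1)
    simp only [map_mul] at h3
    rw [hTmul, hΦnil, LinearEquiv.apply_symm_apply] at h3
    dsimp only at h3
    rw [fst_embed, cls_long q hqn, (αm _).map_zero, dR_zero, add_zero, add_zero] at h3
    rw [h3]
    refine G q hqn (QD.Path.nil i₀) ?_
    have : (QD.Path.nil i₀ : Q.Path i₀ i₀).length = 0 := rfl
    omega
  -- first component of anything containing a y-arrow is zero
  have fst_y : ∀ {i₀ j₀ : (Qe Q t pM).V} (q : (Qe Q t pM).Path i₀ j₀), 1 ≤ numY Q t pM q →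
      (eT (Φm (PB.ι q))).1 = 0 := by
    intro i₀ j₀ q
    induction q with
    | nil _ => intro h; exact absurd h (by simp [numY])
    | cons a p ih =>
      intro h
      rcases a with b | ⟨m, rfl, rfl⟩
      · have hnp : 1 ≤ numY Q t pM p := by
          have : numY Q t pM (QD.Path.cons (Sum.inl b) p) = 0 + numY Q t pM p := rfl
          omega
        have h1 : PB.ι (QD.Path.cons (Sum.inl b) p)
            = PB.ι (QD.Path.cons (Sum.inl b) (QD.Path.nil (Q := Qe Q t pM) _)) * PB.ι p :=
          PB.ι_comp (QD.Path.cons (Sum.inl b) (QD.Path.nil _)) p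
        rw [h1, map_mul, hTmul, hΦarr, LinearEquiv.apply_symm_apply]
        dsimp only
        rw [ih hnp, mul_zero]
      · show (eT (Φm (PB.ι (QD.Path.cons (yArr Q t pM m) p)))).1 = 0
        have h1 : PB.ι (QD.Path.cons (yArr Q t pM m) p)
            = PB.ι (QD.Path.cons (yArr Q t pM m) (QD.Path.nil (Q := Qe Q t pM) _)) * PB.ι p :=
          PB.ι_comp (QD.Path.cons (yArr Q t pM m) (QD.Path.nil _)) p
        rw [h1, map_mul, hTmul, hΦy m, LinearEquiv.apply_symm_apply]
        dsimp only
        rw [zero_mul]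
  -- now the three statements
  have hadd : eT (Φm (PB.ι (embed Q t pM v₁) + PB.ι v₂))
      = eT (Φm (PB.ι (embed Q t pM v₁))) + eT (Φm (PB.ι v₂)) := by
    rw [map_add, map_add]
  have h2fst : (eT (Φm (PB.ι v₂))).1 = 0 := fst_y v₂ hv₂
  refine ⟨?_, ?_, ?_⟩
  · intro h
    rw [hadd]
    refine Prod.ext ?_ ?_
    · show (eT (Φm (PB.ι (embed Q t pM v₁)))).1 + (eT (Φm (PB.ι v₂))).1 = _
      rw [h2fst, add_zero]; rfl
    · show (eT (Φm (PB.ι (embed Q t pM v₁)))).2 + (eT (Φm (PB.ι v₂))).2 = _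
      rw [snd_short v₁ h, zero_add]; rfl
  · intro h1 h2
    rw [hadd]
    refine Prod.ext ?_ ?_
    · show (eT (Φm (PB.ι (embed Q t pM v₁)))).1 + (eT (Φm (PB.ι v₂))).1 = _
      rw [h2fst, add_zero, fst_embed, cls_long v₁ h1]
    · show (eT (Φm (PB.ι (embed Q t pM v₁)))).2 + (eT (Φm (PB.ι v₂))).2
        = ph2 K Q n PA t pM T eT PB Φm (PB.ι (embed Q t pM v₁) + PB.ι v₂)
      rw [show ph2 K Q n PA t pM T eT PB Φm (PB.ι (embed Q t pM v₁) + PB.ι v₂)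
        = (eT (Φm (PB.ι (embed Q t pM v₁) + PB.ι v₂))).2 from rfl, hadd]
      rfl
  · intro h
    have hn' : n ≤ v₁.length := by omega
    rw [hadd]
    refine Prod.ext ?_ ?_
    · show (eT (Φm (PB.ι (embed Q t pM v₁)))).1 + (eT (Φm (PB.ι v₂))).1 = _
      rw [h2fst, add_zero, fst_embed, cls_long v₁ hn']
    · show (eT (Φm (PB.ι (embed Q t pM v₁)))).2 + (eT (Φm (PB.ι v₂))).2 = _
      rw [snd_long v₁ h, zero_add]; rfl

end Statements
end
end
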